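/- arXiv:2604.19479 — 5 statements merged into one kernel-verified Lean document; each statement's English description precedes it below -/
import Mathlib

section
/- Let B ⊆ ℝⁿ be the convex hull of a finite set of points with nonempty interior, let w₀ ∈ ℝⁿ be nonzero, and set F := Face_B(w₀) (so F is an exposed face of B and C(B,F) := {w ≠ 0 | Face_B(w) = F} is its open inner normal cone). Then the closure of C(B,F) taken inside ℝⁿ \ {0} equals {w ∈ ℝⁿ | w ≠ 0 and F ⊆ Face_B(w)}; in other words, the closure of the open inner normal cone of F is the disjoint union of the open inner normal cones of all faces F' of B containing F. -/
/-!
If `w ≠ 0` is a limit of vectors whose face is `F`, then the closed conditions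
`⟪w, x⟫ ≤ ⟪w, y⟫` (`x ∈ F`, `y ∈ B`) pass to the limit, so `F ⊆ Face B w`.
Conversely, if `F = Face B w₀ ⊆ Face B w`, then for every `t > 0` the functional
`w + t • w₀` is minimised exactly on `F`: points of `F` minimise both summands, and a
minimiser `x` of the sum satisfies `⟪w, x₀⟫ ≤ ⟪w, x⟫` for any `x₀ ∈ F`, hence minimises
`⟪w₀, ·⟫`. Letting `t → 0⁺` exhibits `w` as a limit of such vectors.
-/

/-- `Face B w` is the face of `B` on which the linear functional `⟪w, ·⟫` attains
its minimum over `B`; `Face B w = F` says that `w` lies in the open inner normal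
cone `C(B, F)`. -/
def Face {n : ℕ} (B : Set (EuclideanSpace ℝ (Fin n)))
    (w : EuclideanSpace ℝ (Fin n)) : Set (EuclideanSpace ℝ (Fin n)) :=
  {x | x ∈ B ∧ ∀ y ∈ B, (inner ℝ w x : ℝ) ≤ (inner ℝ w y : ℝ)}

open Filter Topology

section Face

variable {n : ℕ} {B : Set (EuclideanSpace ℝ (Fin n))}

theorem isClosed_setOf_mem_face (B : Set (EuclideanSpace ℝ (Fin n)))
    (x : EuclideanSpace ℝ (Fin n)) : IsClosed {w | x ∈ Face B w} := by
  by_cases hx : x ∈ B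
  · have : {w | x ∈ Face B w} = ⋂ y ∈ B, {w | inner ℝ w x ≤ inner ℝ w y} := by
      ext w
      simp [Face, hx]
    rw [this]
    exact isClosed_biInter fun y _ =>
      isClosed_le (continuous_id.inner continuous_const (𝕜 := ℝ))
        (continuous_id.inner continuous_const)
  · have : {w | x ∈ Face B w} = ∅ := Set.eq_empty_of_forall_notMem fun _ hw => hx hw.1
    exact this ▸ isClosed_empty

theorem isClosed_setOf_subset_face (B F : Set (EuclideanSpace ℝ (Fin n))) :
    IsClosed {w | F ⊆ Face B w} := by
  have : {w | F ⊆ Face B w} = ⋂ x ∈ F, {w | x ∈ Face B w} := by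
    ext w
    simp [Set.subset_def]
  exact this ▸ isClosed_biInter fun x _ => isClosed_setOf_mem_face B x

theorem face_nonempty (hB : IsCompact B) (hne : B.Nonempty) (w : EuclideanSpace ℝ (Fin n)) :
    (Face B w).Nonempty := by
  obtain ⟨x, hxB, hx⟩ :=
    hB.exists_isMinOn hne (continuous_const.inner continuous_id (𝕜 := ℝ)).continuousOn
  exact ⟨x, hxB, fun y hy => hx hy⟩

theorem face_add_smul_eq (hB : IsCompact B) {w w₀ : EuclideanSpace ℝ (Fin n)}
    (hF : Face B w₀ ⊆ Face B w) {t : ℝ} (ht : 0 < t) :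
    Face B (w + t • w₀) = Face B w₀ := by
  ext x
  constructor
  · rintro ⟨hxB, hxmin⟩
    obtain ⟨x₀, hx₀⟩ := face_nonempty hB ⟨x, hxB⟩ w₀
    have hsum := hxmin x₀ hx₀.1
    have hw := (hF hx₀).2 x hxB
    simp only [inner_add_left, real_inner_smul_left] at hsum
    have hx_le : inner ℝ w₀ x ≤ inner ℝ w₀ x₀ := le_of_mul_le_mul_left (by linarith) ht
    exact ⟨hxB, fun y hy => hx_le.trans (hx₀.2 y hy)⟩
  · intro hx
    refine ⟨hx.1, fun y hy => ?_⟩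
    simp only [inner_add_left, real_inner_smul_left]
    exact add_le_add ((hF hx).2 y hy) (mul_le_mul_of_nonneg_left (hx.2 y hy) ht.le)

theorem mem_closure_setOf_face_eq (hB : IsCompact B) {w w₀ : EuclideanSpace ℝ (Fin n)}
    (hw : w ≠ 0) (hF : Face B w₀ ⊆ Face B w) :
    w ∈ closure {v | v ≠ 0 ∧ Face B v = Face B w₀} := by
  have htend : Tendsto (fun t : ℝ => w + t • w₀) (𝓝[>] 0) (𝓝 w) := by
    have h : Tendsto (fun t : ℝ => w + t • w₀) (𝓝 0) (𝓝 (w + (0 : ℝ) • w₀)) :=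
      tendsto_const_nhds.add ((continuous_id.smul continuous_const).tendsto 0)
    simpa using h.mono_left nhdsWithin_le_nhds
  refine mem_closure_of_tendsto htend ?_
  filter_upwards [htend.eventually (isOpen_ne.mem_nhds hw), self_mem_nhdsWithin]
    with t hne ht
  exact ⟨hne, face_add_smul_eq hB hF ht⟩

theorem closure_setOf_face_eq_inter_ne_zero (hB : IsCompact B) (w₀ : EuclideanSpace ℝ (Fin n)) :
    closure {w | w ≠ 0 ∧ Face B w = Face B w₀} ∩ {w | w ≠ 0}
      = {w | w ≠ 0 ∧ Face B w₀ ⊆ Face B w} := by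
  ext w
  constructor
  · rintro ⟨hwc, hw⟩
    refine ⟨hw, (isClosed_setOf_subset_face B _).closure_subset_iff.mpr ?_ hwc⟩
    rintro v ⟨-, hv⟩
    exact hv.ge
  · rintro ⟨hw, hF⟩
    exact ⟨mem_closure_setOf_face_eq hB hw hF, hw⟩

end Face

theorem stmt_4_general {n : ℕ}
    (S : Set (EuclideanSpace ℝ (Fin n))) (hS : S.Finite)
    (B : Set (EuclideanSpace ℝ (Fin n))) (hB : B = convexHull ℝ S)
    (w₀ : EuclideanSpace ℝ (Fin n)) :
    closure {w : EuclideanSpace ℝ (Fin n) | w ≠ 0 ∧ Face B w = Face B w₀} ∩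
        {w : EuclideanSpace ℝ (Fin n) | w ≠ 0}
      = {w : EuclideanSpace ℝ (Fin n) | w ≠ 0 ∧ Face B w₀ ⊆ Face B w} :=
  closure_setOf_face_eq_inter_ne_zero (hB ▸ hS.isCompact_convexHull (𝕜 := ℝ)) w₀

/-- For a full-dimensional polytope `B` and the face
`F = Face B w₀` of a nonzero vector `w₀`, the closure of the open inner normal
cone `C(B,F) = {w ≠ 0 | Face B w = F}` taken inside `ℝⁿ \ {0}` is
`{w ≠ 0 | F ⊆ Face B w}`, i.e. the (disjoint) union of the open inner normal
cones of all faces of `B` containing `F`. -/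
theorem stmt_4 {n : ℕ}
    (S : Set (EuclideanSpace ℝ (Fin n))) (hS : S.Finite)
    (B : Set (EuclideanSpace ℝ (Fin n))) (hB : B = convexHull ℝ S)
    (hint : (interior B).Nonempty)
    (w₀ : EuclideanSpace ℝ (Fin n)) (hw₀ : w₀ ≠ 0) :
    closure {w : EuclideanSpace ℝ (Fin n) | w ≠ 0 ∧ Face B w = Face B w₀} ∩
        {w : EuclideanSpace ℝ (Fin n) | w ≠ 0}
      = {w : EuclideanSpace ℝ (Fin n) | w ≠ 0 ∧ Face B w₀ ⊆ Face B w} :=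
  stmt_4_general S hS B hB w₀
end

section
/- Let B ⊆ ℝⁿ be the convex hull of a finite set of points with nonempty interior (a full-dimensional polytope), where n ≥ 1. For a nonzero w ∈ ℝⁿ let dim Face_B(w) denote the dimension of the affine span of Face_B(w) (the rank of the direction submodule of affineSpan ℝ (Face_B(w))), and for 0 ≤ j ≤ n-1 put W_j := {w ∈ ℝⁿ | w ≠ 0 and dim Face_B(w) = n-1-j}. Then for every j with 0 ≤ j ≤ n-1, the closure of W_j taken inside ℝⁿ \ {0} equals {w ∈ ℝⁿ | w ≠ 0 and dim Face_B(w) ≥ n-1-j} = W_0 ∪ W_1 ∪ ⋯ ∪ W_j. (This is the key closure/frontier property in the stratification of ℝP^{n-1} induced by the inner normal fan of B.) -/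
/-!
The face of `conv S` minimizing `⟪w, ·⟫` is the convex hull of the points of `S` minimizing
`⟪w, ·⟫`, so everything reduces to the finite sets `argmin_S w ⊆ S`. Near `w` only points of
`argmin_S w` can minimize, so the face dimension is upper semicontinuous and the closure of
`{dim = e}` lies in `{dim ≥ e}`. Conversely, for small `δ > 0` the functional `w + δ u` is
minimized exactly on `argmin_{argmin_S w} u`, so choosing `u` to cut out a facet of the current
face lowers its dimension by one at a point arbitrarily close to `w`. Facets exist by the usual
ratio-test argument: among directions in the span of a polytope, one whose face has maximal
dimension can otherwise be tilted towards a vector orthogonal to that face, picking up a vertex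
off its affine span.
-/

open Module Set Filter Topology RealInnerProductSpace

variable {E : Type*} [NormedAddCommGroup E] [InnerProductSpace ℝ E]

theorem mem_orthogonal_vectorSpan_iff {s : Set E} {v : E} :
    v ∈ (vectorSpan ℝ s)ᗮ ↔ ∀ a ∈ s, ∀ b ∈ s, ⟪v, a⟫ = ⟪v, b⟫ := by
  rw [← Submodule.span_singleton_le_iff_mem, ← Submodule.isOrtho_iff_le, Submodule.isOrtho_comm,
    Submodule.isOrtho_iff_le, vectorSpan_def, Submodule.span_le]
  constructor
  · intro h a ha b hb
    have := Submodule.mem_orthogonal_singleton_iff_inner_right.1 (h (vsub_mem_vsub ha hb))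
    rwa [vsub_eq_sub, inner_sub_right, sub_eq_zero] at this
  · rintro h _ ⟨a, ha, b, hb, rfl⟩
    change a -ᵥ b ∈ (ℝ ∙ v)ᗮ
    rw [Submodule.mem_orthogonal_singleton_iff_inner_right, vsub_eq_sub,
      inner_sub_right, h a ha b hb, sub_self]

theorem exists_inner_ne_of_mem_vectorSpan {s : Set E} {v : E} (hv : v ∈ vectorSpan ℝ s)
    (hv₀ : v ≠ 0) (x : E) : ∃ t ∈ s, ⟪v, t⟫ ≠ ⟪v, x⟫ := by
  by_contra! h
  have hv' : v ∈ (vectorSpan ℝ s)ᗮ :=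
    mem_orthogonal_vectorSpan_iff.2 fun a ha b hb => (h a ha).trans (h b hb).symm
  exact hv₀ (inner_self_eq_zero.1 (Submodule.inner_right_of_mem_orthogonal hv hv'))

theorem Submodule.exists_mem_orthogonal_ne_zero [FiniteDimensional ℝ E] {V W : Submodule ℝ E}
    (h : finrank ℝ W < finrank ℝ V) : ∃ v ∈ V, v ∈ Wᗮ ∧ v ≠ 0 := by
  by_contra! hV
  have hbot : V ⊓ Wᗮ = ⊥ := (Submodule.eq_bot_iff _).2 fun v hv => hV v hv.1 hv.2
  have hsup := Submodule.finrank_sup_add_finrank_inf_eq V Wᗮ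
  rw [hbot, finrank_bot] at hsup
  have := Submodule.finrank_add_finrank_orthogonal W
  have := (V ⊔ Wᗮ).finrank_le
  omega

namespace Finset

open scoped Classical in
noncomputable def argminInner (T : Finset E) (w : E) : Finset E :=
  T.filter fun t => ∀ s ∈ T, ⟪w, t⟫ ≤ ⟪w, s⟫

noncomputable def faceDim (T : Finset E) (w : E) : ℕ :=
  finrank ℝ (vectorSpan ℝ (T.argminInner w : Set E))

variable {T F : Finset E} {u v w : E} {s t : E}

@[simp]
theorem mem_argminInner : t ∈ T.argminInner w ↔ t ∈ T ∧ ∀ s ∈ T, ⟪w, t⟫ ≤ ⟪w, s⟫ := by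
  classical
  simp [argminInner]

theorem argminInner_subset (T : Finset E) (w : E) : T.argminInner w ⊆ T :=
  fun _ ht => (mem_argminInner.1 ht).1

theorem argminInner_nonempty (hT : T.Nonempty) (w : E) : (T.argminInner w).Nonempty := by
  obtain ⟨t, ht, hmin⟩ := T.exists_min_image (fun t => ⟪w, t⟫) hT
  exact ⟨t, mem_argminInner.2 ⟨ht, hmin⟩⟩

theorem inner_eq_of_mem_argminInner (hs : s ∈ T.argminInner w) (ht : t ∈ T.argminInner w) :
    ⟪w, s⟫ = ⟪w, t⟫ :=
  le_antisymm ((mem_argminInner.1 hs).2 t (argminInner_subset T w ht))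
    ((mem_argminInner.1 ht).2 s (argminInner_subset T w hs))

theorem mem_orthogonal_vectorSpan_argminInner (T : Finset E) (w : E) :
    w ∈ (vectorSpan ℝ (T.argminInner w : Set E))ᗮ :=
  mem_orthogonal_vectorSpan_iff.2 fun _ ha _ hb => inner_eq_of_mem_argminInner ha hb

theorem convexHull_argminInner (T : Finset E) (w : E) :
    convexHull ℝ (T.argminInner w : Set E) =
      {x ∈ convexHull ℝ (T : Set E) | ∀ y ∈ convexHull ℝ (T : Set E), ⟪w, x⟫ ≤ ⟪w, y⟫} := by
  rcases T.eq_empty_or_nonempty with rfl | hT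
  · simp [argminInner]
  obtain ⟨t₀, ht₀⟩ := argminInner_nonempty hT w
  have hlin : IsLinearMap ℝ (fun x : E => ⟪w, x⟫) := (innerₛₗ ℝ w).isLinear
  have hge : convexHull ℝ (T : Set E) ⊆ {x | ⟪w, t₀⟫ ≤ ⟪w, x⟫} :=
    convexHull_min (fun t ht => (mem_argminInner.1 ht₀).2 t ht) (convex_halfSpace_ge hlin _)
  have heq : convexHull ℝ (T.argminInner w : Set E) ⊆ {x | ⟪w, x⟫ = ⟪w, t₀⟫} :=
    convexHull_min (fun t ht => inner_eq_of_mem_argminInner ht ht₀) (convex_hyperplane hlin _)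
  ext x
  refine ⟨fun hx => ⟨convexHull_mono (coe_subset.2 (argminInner_subset T w)) hx,
    fun y hy => (heq hx).trans_le (hge hy)⟩, fun ⟨hxT, hxmin⟩ => ?_⟩
  obtain ⟨a, ha₀, ha₁, rfl⟩ := mem_convexHull.1 hxT
  -- the weights vanish off the minimizers, since `∑ a t (⟪w, t⟫ - ⟪w, t₀⟫) = ⟪w, x⟫ - ⟪w, t₀⟫ ≤ 0`
  have hnonneg : ∀ t ∈ T, 0 ≤ a t * (⟪w, t⟫ - ⟪w, t₀⟫) := fun t ht =>
    mul_nonneg (ha₀ t ht) (sub_nonneg.2 ((mem_argminInner.1 ht₀).2 t ht))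
  have hsum : ∑ t ∈ T, a t * (⟪w, t⟫ - ⟪w, t₀⟫) = ⟪w, T.centerMass a id⟫ - ⟪w, t₀⟫ := by
    simp only [centerMass_eq_of_sum_1 _ _ ha₁, id, inner_sum, real_inner_smul_right, mul_sub,
      sum_sub_distrib, ← sum_mul, ha₁, one_mul]
  have hzero := (sum_eq_zero_iff_of_nonneg hnonneg).1 <| le_antisymm
    (hsum ▸ sub_nonpos.2 (hxmin _ (subset_convexHull ℝ _ (argminInner_subset T w ht₀))))
    (sum_nonneg hnonneg)
  have hsupp : ∀ t ∈ T, t ∉ T.argminInner w → a t = 0 := fun t ht hnot => by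
    by_contra hat
    have heq : ⟪w, t⟫ = ⟪w, t₀⟫ := sub_eq_zero.1 ((mul_eq_zero.1 (hzero t ht)).resolve_left hat)
    exact hnot (mem_argminInner.2 ⟨ht, fun s hs => heq ▸ (mem_argminInner.1 ht₀).2 s hs⟩)
  rw [← centerMass_subset id (argminInner_subset T w) hsupp]
  refine centerMass_mem_convexHull _ (fun t ht => ha₀ t (argminInner_subset T w ht)) ?_
    fun t ht => ht
  rw [sum_subset (argminInner_subset T w) hsupp, ha₁]
  exact one_pos

theorem eventually_argminInner_subset (T : Finset E) (w : E) :
    ∀ᶠ w' in 𝓝 w, T.argminInner w' ⊆ T.argminInner w := by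
  have key : ∀ s ∈ T, ∀ᶠ w' in 𝓝 w, s ∈ T.argminInner w' → s ∈ T.argminInner w := by
    intro s hs
    by_cases hsw : s ∈ T.argminInner w
    · exact .of_forall fun _ _ => hsw
    obtain ⟨r, hr, hrs⟩ : ∃ r ∈ T, ⟪w, r⟫ < ⟪w, s⟫ := by simpa [hs] using hsw
    filter_upwards [ContinuousAt.eventually_lt (f := fun w' => ⟪w', r⟫) (g := fun w' => ⟪w', s⟫)
      (by fun_prop) (by fun_prop) hrs] with w' h hmem
    exact absurd ((mem_argminInner.1 hmem).2 r hr) h.not_ge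
  filter_upwards [(eventually_all_finset T).2 key] with w' h s hs
    using h s (argminInner_subset T w' hs) hs

theorem argminInner_eq_of_subset (hFT : F ⊆ T) (h : T.argminInner w ⊆ F) :
    T.argminInner w = F.argminInner w := by
  ext s
  refine ⟨fun hs => mem_argminInner.2 ⟨h hs, fun r hr => (mem_argminInner.1 hs).2 r (hFT hr)⟩,
    fun hs => mem_argminInner.2 ⟨hFT (mem_argminInner.1 hs).1, fun r hr => ?_⟩⟩
  obtain ⟨t, ht⟩ := argminInner_nonempty ⟨r, hr⟩ w
  exact ((mem_argminInner.1 hs).2 t (h ht)).trans ((mem_argminInner.1 ht).2 r hr)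

theorem argminInner_argminInner_add_smul {δ : ℝ} (hδ : 0 < δ) :
    (T.argminInner w).argminInner (w + δ • u) = (T.argminInner w).argminInner u := by
  ext s
  simp only [mem_argminInner (T := T.argminInner w), inner_add_left, real_inner_smul_left]
  refine and_congr_right fun hs => forall₂_congr fun r hr => ?_
  rw [inner_eq_of_mem_argminInner hs hr, add_le_add_iff_left, mul_le_mul_iff_right₀ hδ]

theorem tendsto_add_smul_nhdsGT_zero (w u : E) :
    Tendsto (fun δ : ℝ => w + δ • u) (𝓝[>] 0) (𝓝 w) :=
  ((Continuous.tendsto' (by fun_prop) 0 w (by simp)).mono_left nhdsWithin_le_nhds)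

theorem eventually_argminInner_add_smul (T : Finset E) (w u : E) :
    ∀ᶠ δ in 𝓝[>] (0 : ℝ), T.argminInner (w + δ • u) = (T.argminInner w).argminInner u := by
  filter_upwards [(tendsto_add_smul_nhdsGT_zero w u).eventually
    (eventually_argminInner_subset T w), self_mem_nhdsWithin] with δ hsub hδ
  rw [argminInner_eq_of_subset (argminInner_subset T w) hsub, argminInner_argminInner_add_smul hδ]

theorem exists_subset_argminInner_add_smul {t₀ : E} (ht₀ : t₀ ∈ T.argminInner u)
    (hv : ∀ a ∈ T.argminInner u, ⟪v, a⟫ = ⟪v, t₀⟫) (hex : ∃ t ∈ T, ⟪v, t⟫ < ⟪v, t₀⟫) :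
    ∃ l : ℝ, 0 < l ∧ T.argminInner u ⊆ T.argminInner (u + l • v) ∧
      ∃ t ∈ T.argminInner (u + l • v), ⟪v, t⟫ < ⟪v, t₀⟫ := by
  classical
  -- ratio test: `ratio t₁` is the least `l` at which a point where `v` is below its value on the
  -- face becomes a minimizer of `u + l • v`
  let ratio (t : E) : ℝ := (⟪u, t⟫ - ⟪u, t₀⟫) / (⟪v, t₀⟫ - ⟪v, t⟫)
  obtain ⟨t₁, ht₁N, hmin⟩ := (T.filter fun t => ⟪v, t⟫ < ⟪v, t₀⟫).exists_min_image ratio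
    (let ⟨t, ht, hvt⟩ := hex; ⟨t, mem_filter.2 ⟨ht, hvt⟩⟩)
  obtain ⟨ht₁, hvt₁⟩ := mem_filter.1 ht₁N
  have hut₁ : ⟪u, t₀⟫ < ⟪u, t₁⟫ := by
    by_contra! h
    exact hvt₁.ne (hv t₁ (mem_argminInner.2
      ⟨ht₁, fun s hs => h.trans ((mem_argminInner.1 ht₀).2 s hs)⟩))
  have hl : 0 < ratio t₁ := div_pos (sub_pos.2 hut₁) (sub_pos.2 hvt₁)
  have hle : ∀ s ∈ T, ⟪u + ratio t₁ • v, t₀⟫ ≤ ⟪u + ratio t₁ • v, s⟫ := by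
    intro s hs
    simp only [inner_add_left, real_inner_smul_left]
    rcases lt_or_ge ⟪v, s⟫ ⟪v, t₀⟫ with hvs | hvs
    · have h := hmin s (mem_filter.2 ⟨hs, hvs⟩)
      rw [le_div_iff₀ (sub_pos.2 hvs), mul_sub] at h
      linarith
    · nlinarith [(mem_argminInner.1 ht₀).2 s hs]
  have hmem : ∀ a ∈ T, ⟪u + ratio t₁ • v, a⟫ = ⟪u + ratio t₁ • v, t₀⟫ →
      a ∈ T.argminInner (u + ratio t₁ • v) :=
    fun a ha h => mem_argminInner.2 ⟨ha, fun s hs => h ▸ hle s hs⟩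
  refine ⟨ratio t₁, hl, fun a ha => hmem a (argminInner_subset T u ha) ?_,
    t₁, hmem t₁ ht₁ ?_, hvt₁⟩
  · simp only [inner_add_left, real_inner_smul_left, inner_eq_of_mem_argminInner ha ht₀, hv a ha]
  · have h : ratio t₁ * (⟪v, t₀⟫ - ⟪v, t₁⟫) = ⟪u, t₁⟫ - ⟪u, t₀⟫ :=
      div_mul_cancel₀ _ (sub_pos.2 hvt₁).ne'
    simp only [inner_add_left, real_inner_smul_left]
    linarith [mul_sub (ratio t₁) ⟪v, t₀⟫ ⟪v, t₁⟫]

section FiniteDimensional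

variable [FiniteDimensional ℝ E]

theorem faceDim_lt {V : Submodule ℝ E}
    (hV : vectorSpan ℝ (T.argminInner u : Set E) ≤ V) (hu : u ∈ V) (hu₀ : u ≠ 0) :
    T.faceDim u < finrank ℝ V :=
  Submodule.finrank_lt_finrank_of_lt <| SetLike.lt_iff_le_and_exists.2 ⟨hV, u, hu, fun h =>
    hu₀ <| inner_self_eq_zero.1 <|
      Submodule.inner_right_of_mem_orthogonal h (T.mem_orthogonal_vectorSpan_argminInner u)⟩

theorem exists_faceDim_lt (hu : u ∈ vectorSpan ℝ (T : Set E))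
    (hu₀ : u ≠ 0) (hdim : T.faceDim u + 1 < finrank ℝ (vectorSpan ℝ (T : Set E))) :
    ∃ u' ∈ vectorSpan ℝ (T : Set E), u' ≠ 0 ∧ T.faceDim u < T.faceDim u' := by
  set V := vectorSpan ℝ (T : Set E)
  set K := vectorSpan ℝ (T.argminInner u : Set E)
  obtain ⟨t₀, ht₀⟩ := argminInner_nonempty (T.eq_empty_or_nonempty.resolve_left <| by
    rintro rfl; simp_all [V]) u
  -- tilting `u` towards a `v` orthogonal to both the face and `u` adds a point off the face's
  -- affine span, and keeps `u` nonzero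
  obtain ⟨v, hvV, hvKu, hv₀⟩ :=
      Submodule.exists_mem_orthogonal_ne_zero (W := K ⊔ ℝ ∙ u) (V := V) <| by
    have := Submodule.finrank_add_le_finrank_add_finrank K (ℝ ∙ u)
    rw [finrank_span_singleton hu₀] at this
    exact this.trans_lt hdim
  rw [← Submodule.inf_orthogonal] at hvKu
  obtain ⟨hvK, hvu⟩ := hvKu
  obtain ⟨t, ht, hvt⟩ := exists_inner_ne_of_mem_vectorSpan hvV hv₀ t₀
  obtain ⟨v', hv'V, hv'K, hv'u, hex⟩ : ∃ v' ∈ V, v' ∈ Kᗮ ∧ v' ∈ (ℝ ∙ u)ᗮ ∧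
      ∃ t ∈ T, ⟪v', t⟫ < ⟪v', t₀⟫ := by
    rcases hvt.lt_or_gt with h | h
    · exact ⟨v, hvV, hvK, hvu, t, ht, h⟩
    · exact ⟨-v, V.neg_mem hvV, Kᗮ.neg_mem hvK, (ℝ ∙ u)ᗮ.neg_mem hvu, t, ht,
        by simpa only [inner_neg_left, neg_lt_neg_iff] using h⟩
  obtain ⟨l, hl, hsub, t₁, ht₁, hvt₁⟩ := exists_subset_argminInner_add_smul ht₀
    (fun a ha => mem_orthogonal_vectorSpan_iff.1 hv'K a ha t₀ ht₀) hex
  refine ⟨u + l • v', V.add_mem hu (V.smul_mem l hv'V), fun h => hu₀ ?_, ?_⟩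
  · have h' := congrArg (⟪u, ·⟫) h
    simp only [inner_add_right, real_inner_smul_right, inner_zero_right,
      Submodule.mem_orthogonal_singleton_iff_inner_right.1 hv'u, mul_zero, add_zero] at h'
    exact inner_self_eq_zero.1 h'
  · refine Submodule.finrank_lt_finrank_of_lt <| SetLike.lt_iff_le_and_exists.2
      ⟨vectorSpan_mono ℝ (coe_subset.2 hsub), t₁ -ᵥ t₀, vsub_mem_vectorSpan ℝ ht₁ (hsub ht₀),
        fun h => ?_⟩
    have h' := Submodule.inner_right_of_mem_orthogonal h hv'K
    rw [vsub_eq_sub, inner_sub_left, real_inner_comm v' t₁, real_inner_comm v' t₀] at h'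
    linarith

theorem exists_faceDim_eq_sub_one
    (hT : 1 ≤ finrank ℝ (vectorSpan ℝ (T : Set E))) :
    ∃ u, T.faceDim u = finrank ℝ (vectorSpan ℝ (T : Set E)) - 1 := by
  set D := {e | ∃ u ∈ vectorSpan ℝ (T : Set E), u ≠ 0 ∧ T.faceDim u = e}
  have hlt : ∀ e ∈ D, e < finrank ℝ (vectorSpan ℝ (T : Set E)) := by
    rintro _ ⟨u, hu, hu₀, rfl⟩
    exact faceDim_lt
      (vectorSpan_mono ℝ (coe_subset.2 (argminInner_subset T u))) hu hu₀
  have hD : D.Nonempty := by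
    obtain ⟨u, hu, hu₀⟩ := Submodule.exists_mem_ne_zero_of_ne_bot
      fun h : vectorSpan ℝ (T : Set E) = ⊥ => by simp [h] at hT
    exact ⟨_, u, hu, hu₀, rfl⟩
  have hbdd : BddAbove D := ⟨_, fun e he => (hlt e he).le⟩
  obtain ⟨u, hu, hu₀, hue⟩ := Nat.sSup_mem hD hbdd
  refine ⟨u, ?_⟩
  by_contra hne
  have := hlt _ ⟨u, hu, hu₀, rfl⟩
  obtain ⟨u', hu', hu'₀, hlt'⟩ := exists_faceDim_lt hu hu₀ (by omega)
  exact (le_csSup hbdd ⟨u', hu', hu'₀, rfl⟩).not_gt (hue ▸ hlt')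

theorem mem_closure_setOf_faceDim_eq {e : ℕ} (he : e ≤ T.faceDim w) :
    w ∈ closure {w' | T.faceDim w' = e} := by
  obtain ⟨k, hk⟩ := Nat.exists_eq_add_of_le he
  induction k generalizing w with
  | zero => exact subset_closure hk
  | succ k ih =>
    obtain ⟨u, hu⟩ := exists_faceDim_eq_sub_one (T := T.argminInner w)
      (by unfold faceDim at hk; omega)
    rw [← closure_closure]
    refine mem_closure_of_tendsto (tendsto_add_smul_nhdsGT_zero w u) ?_
    filter_upwards [eventually_argminInner_add_smul T w u] with δ hδ
    have hδdim : T.faceDim (w + δ • u) = T.faceDim w - 1 := by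
      rw [faceDim, hδ]
      exact hu
    exact ih (by omega) (by omega)

theorem closure_setOf_faceDim_eq (T : Finset E) (e : ℕ) :
    closure {w | T.faceDim w = e} = {w | e ≤ T.faceDim w} := by
  ext w
  refine ⟨fun hw => ?_, mem_closure_setOf_faceDim_eq⟩
  obtain ⟨w', hw', hsub⟩ := ((mem_closure_iff_frequently.1 hw).and_eventually
    (eventually_argminInner_subset T w)).exists
  exact hw' ▸ Submodule.finrank_mono (vectorSpan_mono ℝ (coe_subset.2 hsub))

end FiniteDimensional

end Finset

theorem finrank_direction_affineSpan_Face {n : ℕ} (T : Finset (EuclideanSpace ℝ (Fin n)))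
    (w : EuclideanSpace ℝ (Fin n)) :
    finrank ℝ (affineSpan ℝ
      (Face (convexHull ℝ (T : Set (EuclideanSpace ℝ (Fin n)))) w)).direction = T.faceDim w := by
  have hface : Face (convexHull ℝ (T : Set (EuclideanSpace ℝ (Fin n)))) w =
      convexHull ℝ (T.argminInner w : Set (EuclideanSpace ℝ (Fin n))) :=
    (T.convexHull_argminInner w).symm
  rw [hface, affineSpan_convexHull, direction_affineSpan, Finset.faceDim]

theorem IsOpen.closure_inter_inter_eq {X : Type*} [TopologicalSpace X] {s t : Set X}
    (ht : IsOpen t) : closure (t ∩ s) ∩ t = closure s ∩ t :=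
  Subset.antisymm (inter_subset_inter_left t (closure_mono inter_subset_right))
    (subset_inter (inter_comm t s ▸ ht.closure_inter) inter_subset_right)

theorem stmt_5_general {n : ℕ}
    (S : Set (EuclideanSpace ℝ (Fin n))) (hS : S.Finite)
    (B : Set (EuclideanSpace ℝ (Fin n))) (hB : B = convexHull ℝ S)
    (W : ℕ → Set (EuclideanSpace ℝ (Fin n)))
    (hW : ∀ j, W j = {w | w ≠ 0 ∧
      Module.finrank ℝ (affineSpan ℝ (Face B w)).direction = n - 1 - j})
    (j : ℕ) :
    closure (W j) ∩ {w : EuclideanSpace ℝ (Fin n) | w ≠ 0}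
      = {w : EuclideanSpace ℝ (Fin n) | w ≠ 0 ∧
          n - 1 - j ≤ Module.finrank ℝ (affineSpan ℝ (Face B w)).direction} ∧
    closure (W j) ∩ {w : EuclideanSpace ℝ (Fin n) | w ≠ 0}
      = ⋃ i ∈ Finset.Iic j, W i := by
  lift S to Finset (EuclideanSpace ℝ (Fin n)) using hS
  subst hB
  simp only [finrank_direction_affineSpan_Face] at hW ⊢
  have hdim : ∀ w : EuclideanSpace ℝ (Fin n), w ≠ 0 → S.faceDim w < n := fun w hw => by
    simpa using Finset.faceDim_lt le_top Submodule.mem_top hw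
  have hclosure : closure (W j) ∩ {w | w ≠ 0} = {w | w ≠ 0 ∧ n - 1 - j ≤ S.faceDim w} := by
    rw [hW, ofPred_and, isOpen_ne.closure_inter_inter_eq, Finset.closure_setOf_faceDim_eq]
    ext w
    exact and_comm
  refine ⟨hclosure, hclosure.trans ?_⟩
  ext w
  simp only [hW, mem_ofPred_eq, mem_iUnion, Finset.mem_Iic, exists_prop]
  constructor
  · rintro ⟨hw, hle⟩
    have := hdim w hw
    exact ⟨n - 1 - S.faceDim w, by omega, hw, by omega⟩
  · rintro ⟨i, hi, hw, hi'⟩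
    exact ⟨hw, by omega⟩

/-- Let `B` be a full-dimensional polytope in `ℝⁿ` and, for
`0 ≤ j ≤ n-1`, let `W j` be the set of nonzero `w` whose minimizing face
`Face B w` has dimension `n-1-j` (dimension = rank of the direction of the
affine span). Then the closure of `W j` inside `ℝⁿ \ {0}` is
`{w ≠ 0 | dim (Face B w) ≥ n-1-j} = W 0 ∪ ⋯ ∪ W j`. -/
theorem stmt_5 {n : ℕ} (hn : 1 ≤ n)
    (S : Set (EuclideanSpace ℝ (Fin n))) (hS : S.Finite)
    (B : Set (EuclideanSpace ℝ (Fin n))) (hB : B = convexHull ℝ S)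
    (hint : (interior B).Nonempty)
    (W : ℕ → Set (EuclideanSpace ℝ (Fin n)))
    (hW : ∀ j, W j = {w | w ≠ 0 ∧
      Module.finrank ℝ (affineSpan ℝ (Face B w)).direction = n - 1 - j})
    (j : ℕ) (hj : j ≤ n - 1) :
    closure (W j) ∩ {w : EuclideanSpace ℝ (Fin n) | w ≠ 0}
      = {w : EuclideanSpace ℝ (Fin n) | w ≠ 0 ∧
          n - 1 - j ≤ Module.finrank ℝ (affineSpan ℝ (Face B w)).direction} ∧
    closure (W j) ∩ {w : EuclideanSpace ℝ (Fin n) | w ≠ 0}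
      = ⋃ i ∈ Finset.Iic j, W i :=
  stmt_5_general S hS B hB W hW j
end

section
/- Let B ⊆ ℝⁿ be the convex hull of a finite set of points with 0 in its interior and B = -B. Let w₀ ∈ ℝⁿ be nonzero and F := Face_B(w₀) an exposed face of B, and define the dual face F* := {y ∈ ℝⁿ | ⟪y, x⟫ ≤ 1 for all x ∈ B, and ⟪y, x⟫ = 1 for all x ∈ F} (a face of the dual polytope B* = polar of B). Let N ⊆ ℝⁿ be a linear subspace. Then there exists a nonzero w ∈ N with Face_B(w) = F if and only if N meets the relative interior (intrinsicInterior) of F*, i.e. N ∩ intrinsicInterior(F*) ≠ ∅. (This is the characterization Type(N) = {F a face of B | N ∩ F* ≠ ∅}, made precise by taking the relative interior of the dual face.) -/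
open Set Filter Topology
open scoped RealInnerProductSpace

section IntrinsicInterior

variable {E : Type*} [NormedAddCommGroup E] [NormedSpace ℝ E] {C : Set E} {y : E}

theorem mem_intrinsicInterior_iff_mem_nhdsWithin :
    y ∈ intrinsicInterior ℝ C ↔ y ∈ affineSpan ℝ C ∧ C ∈ 𝓝[affineSpan ℝ C] y := by
  constructor
  · rintro ⟨y', hy', rfl⟩
    have := mem_nhds_subtype_iff_nhdsWithin.mp (mem_interior_iff_mem_nhds.mp hy')
    exact ⟨y'.2, mem_of_superset this (image_preimage_subset _ _)⟩
  · rintro ⟨hyA, hCy⟩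
    refine ⟨⟨y, hyA⟩, mem_interior_iff_mem_nhds.mpr ?_, rfl⟩
    rw [mem_nhds_subtype_iff_nhdsWithin]
    exact mem_of_superset (inter_mem hCy self_mem_nhdsWithin)
      fun x ⟨hxC, hxA⟩ ↦ ⟨⟨x, hxA⟩, hxC, rfl⟩

theorem exists_add_smul_sub_mem_of_mem_intrinsicInterior (hy : y ∈ intrinsicInterior ℝ C)
    {p : E} (hp : p ∈ C) : ∃ ε : ℝ, 0 < ε ∧ y + ε • (y - p) ∈ C := by
  obtain ⟨hyA, hCy⟩ := mem_intrinsicInterior_iff_mem_nhdsWithin.mp hy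
  have hpA : p ∈ affineSpan ℝ C := subset_affineSpan ℝ C hp
  have hline : Tendsto (fun t : ℝ ↦ y + t • (y - p)) (𝓝[>] 0) (𝓝[affineSpan ℝ C] y) := by
    refine tendsto_nhdsWithin_of_tendsto_nhds_of_eventually_within _ ?_ (.of_forall fun t ↦ ?_)
    · exact ((by fun_prop : Continuous fun t : ℝ ↦ y + t • (y - p)).tendsto' 0 y
        (by simp)).mono_left nhdsWithin_le_nhds
    · simpa [vsub_eq_sub, vadd_eq_add, add_comm] using
        (affineSpan ℝ C).smul_vsub_vadd_mem t hyA hpA hyA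
  obtain ⟨ε, hεC, hε⟩ := ((hline.eventually hCy).and self_mem_nhdsWithin).exists
  exact ⟨ε, hε, hεC⟩

theorem Convex.combo_intrinsicInterior_self_mem_intrinsicInterior (hC : Convex ℝ C)
    {z w : E} (hz : z ∈ intrinsicInterior ℝ C) (hw : w ∈ C) {a b : ℝ} (ha : 0 < a) (hb : 0 ≤ b)
    (hab : a + b = 1) : a • z + b • w ∈ intrinsicInterior ℝ C := by
  obtain ⟨hzA, hCz⟩ := mem_intrinsicInterior_iff_mem_nhdsWithin.mp hz
  have hwA : w ∈ affineSpan ℝ C := subset_affineSpan ℝ C hw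
  have hmem : ∀ t : ℝ, ∀ x ∈ affineSpan ℝ C, t • (x - w) + w ∈ affineSpan ℝ C := fun t x hx ↦ by
    simpa [vsub_eq_sub, vadd_eq_add] using (affineSpan ℝ C).smul_vsub_vadd_mem t hx hwA hwA
  have hcombo : a • z + b • w = a • (z - w) + w := by
    linear_combination (norm := module) hab • w
  set g : E → E := fun x ↦ a⁻¹ • (x - w) + w
  have hgz : g (a • z + b • w) = z := by
    simp only [g, hcombo, add_sub_cancel_right, inv_smul_smul₀ ha.ne', sub_add_cancel]
  have hg : Tendsto g (𝓝[affineSpan ℝ C] (a • z + b • w)) (𝓝[affineSpan ℝ C] z) := by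
    refine tendsto_nhdsWithin_of_tendsto_nhds_of_eventually_within _ ?_ ?_
    · exact ((by fun_prop : Continuous g).tendsto' _ _ hgz).mono_left nhdsWithin_le_nhds
    · exact eventually_nhdsWithin_of_forall fun x hx ↦ hmem _ x hx
  refine mem_intrinsicInterior_iff_mem_nhdsWithin.mpr ⟨hcombo ▸ hmem a z hzA, ?_⟩
  refine mem_of_superset (hg hCz) fun x hx ↦ ?_
  have hx' : x = a • g x + b • w := by
    simp only [g, smul_add, smul_smul, mul_inv_cancel₀ ha.ne', one_smul]
    linear_combination (norm := module) -hab • w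
  exact hx' ▸ hC hx hw ha.le hb hab

theorem Convex.mem_intrinsicInterior_iff [FiniteDimensional ℝ E] (hC : Convex ℝ C) :
    y ∈ intrinsicInterior ℝ C ↔ y ∈ C ∧ ∀ p ∈ C, ∃ ε : ℝ, 0 < ε ∧ y + ε • (y - p) ∈ C := by
  refine ⟨fun hy ↦ ⟨intrinsicInterior_subset hy,
    fun p ↦ exists_add_smul_sub_mem_of_mem_intrinsicInterior hy⟩, fun ⟨hy, hext⟩ ↦ ?_⟩
  obtain ⟨z, hz⟩ := Set.Nonempty.intrinsicInterior hC ⟨y, hy⟩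
  obtain ⟨ε, hε, hw⟩ := hext z (intrinsicInterior_subset hz)
  have hy_eq : y = (ε / (1 + ε)) • z + (1 / (1 + ε)) • (y + ε • (y - z)) := by
    match_scalars <;> field_simp
    ring
  rw [hy_eq]
  exact hC.combo_intrinsicInterior_self_mem_intrinsicInterior hz hw (by positivity)
    (by positivity) (by field_simp; ring)

end IntrinsicInterior

section DualFace

variable {E : Type*} [NormedAddCommGroup E] [InnerProductSpace ℝ E]

/-- The dual face `F*` of `F ⊆ B`, a face of the polar `B*`. -/
def dualFace (B F : Set E) : Set E :=
  {y | (∀ x ∈ B, ⟪y, x⟫ ≤ 1) ∧ ∀ x ∈ F, ⟪y, x⟫ = 1}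

theorem convex_dualFace (B F : Set E) : Convex ℝ (dualFace B F) := by
  intro y₁ h₁ y₂ h₂ a b ha hb hab
  simp only [dualFace, mem_ofPred_eq, inner_add_left, real_inner_smul_left] at h₁ h₂ ⊢
  refine ⟨fun x hx ↦ ?_, fun x hx ↦ ?_⟩
  · nlinarith [h₁.1 x hx, h₂.1 x hx]
  · rw [h₁.2 x hx, h₂.2 x hx]; linarith

theorem forall_mem_convexHull_inner_le_one {S : Set E} {v : E} (h : ∀ s ∈ S, ⟪v, s⟫ ≤ 1) :
    ∀ x ∈ convexHull ℝ S, ⟪v, x⟫ ≤ 1 :=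
  convexHull_min h (convex_halfSpace_le (innerₛₗ ℝ v).isLinear 1)

theorem inner_add_smul_sub_left (y z x : E) (ε : ℝ) :
    ⟪y + ε • (y - z), x⟫ = ⟪y, x⟫ + ε * (⟪y, x⟫ - ⟪z, x⟫) := by
  rw [inner_add_left, real_inner_smul_left, inner_sub_left]

theorem mem_intrinsicInterior_dualFace [FiniteDimensional ℝ E] {S F : Set E} (hS : S.Finite)
    {y : E} (hy : y ∈ dualFace (convexHull ℝ S) F)
    (hyF : ∀ x ∈ convexHull ℝ S, ⟪y, x⟫ = 1 → x ∈ F) :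
    y ∈ intrinsicInterior ℝ (dualFace (convexHull ℝ S) F) := by
  refine (convex_dualFace _ _).mem_intrinsicInterior_iff.mpr ⟨hy, fun z hz ↦ ?_⟩
  have hvertex : ∀ s ∈ S, ∀ᶠ ε in 𝓝[>] (0 : ℝ), ⟪y + ε • (y - z), s⟫ ≤ 1 := by
    intro s hs
    have hsB := subset_convexHull ℝ S hs
    rcases (hy.1 s hsB).lt_or_eq with hlt | heq
    · have hcont : Tendsto (fun ε : ℝ ↦ ⟪y + ε • (y - z), s⟫) (𝓝 0) (𝓝 ⟪y, s⟫) :=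
        (by fun_prop : Continuous fun ε : ℝ ↦ ⟪y + ε • (y - z), s⟫).tendsto' _ _ (by simp)
      exact (hcont.mono_left nhdsWithin_le_nhds).eventually_le_const hlt
    · refine .of_forall fun ε ↦ ?_
      rw [inner_add_smul_sub_left, heq, hz.2 s (hyF s hsB heq)]
      simp
  obtain ⟨ε, hεS, hε⟩ := ((hS.eventually_all.mpr hvertex).and self_mem_nhdsWithin).exists
  refine ⟨ε, hε, forall_mem_convexHull_inner_le_one hεS, fun x hx ↦ ?_⟩
  rw [inner_add_smul_sub_left, hy.2 x hx, hz.2 x hx]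
  ring

theorem mem_of_inner_eq_one_of_mem_intrinsicInterior_dualFace {B F : Set E} {y y₀ : E}
    (hy : y ∈ intrinsicInterior ℝ (dualFace B F)) (hy₀ : y₀ ∈ dualFace B F)
    (hy₀F : ∀ x ∈ B, ⟪y₀, x⟫ = 1 → x ∈ F) {x : E} (hx : x ∈ B) (hyx : ⟪y, x⟫ = 1) :
    x ∈ F := by
  obtain ⟨ε, hε, hext⟩ := exists_add_smul_sub_mem_of_mem_intrinsicInterior hy hy₀
  have := hext.1 x hx
  rw [inner_add_smul_sub_left, hyx] at this
  refine hy₀F x hx (le_antisymm (hy₀.1 x hx) ?_)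
  nlinarith

end DualFace

section Face

variable {n : ℕ} {B : Set (EuclideanSpace ℝ (Fin n))}

theorem face_eq_of_mem {w x₀ : EuclideanSpace ℝ (Fin n)} (hx₀ : x₀ ∈ Face B w) :
    Face B w = {x ∈ B | ⟪w, x⟫ = ⟪w, x₀⟫} := by
  ext x
  exact ⟨fun hx ↦ ⟨hx.1, le_antisymm (hx.2 x₀ hx₀.1) (hx₀.2 x hx.1)⟩,
    fun hx ↦ ⟨hx.1, fun y hy ↦ hx.2 ▸ hx₀.2 y hy⟩⟩

theorem exists_mem_face_inner_neg (hB : IsCompact B) (h0 : 0 ∈ interior B)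
    {w : EuclideanSpace ℝ (Fin n)} (hw : w ≠ 0) : ∃ x₀ ∈ Face B w, ⟪w, x₀⟫ < 0 := by
  obtain ⟨x₀, hx₀B, hmin⟩ := hB.exists_isMinOn ⟨0, interior_subset h0⟩
    (by fun_prop : Continuous fun x ↦ ⟪w, x⟫).continuousOn
  refine ⟨x₀, ⟨hx₀B, fun y hy ↦ hmin hy⟩, ?_⟩
  have hline : Tendsto (fun t : ℝ ↦ -(t • w)) (𝓝[>] 0) (𝓝 0) :=
    ((by fun_prop : Continuous fun t : ℝ ↦ -(t • w)).tendsto' 0 0 (by simp)).mono_left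
      nhdsWithin_le_nhds
  obtain ⟨ε, hεB, hε⟩ :=
    ((hline.eventually (mem_interior_iff_mem_nhds.mp h0)).and self_mem_nhdsWithin).exists
  have hw' : 0 < ‖w‖ := norm_pos_iff.mpr hw
  calc ⟪w, x₀⟫ ≤ ⟪w, -(ε • w)⟫ := hmin hεB
    _ = -(ε * ‖w‖ ^ 2) := by
      rw [inner_neg_right, real_inner_smul_right, real_inner_self_eq_norm_sq]
    _ < 0 := neg_neg_of_pos (by positivity)

/-- The witness is `c = m⁻¹`, where `m < 0` is the minimum of `⟪w, ·⟫` on `B`. -/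
theorem exists_smul_mem_dualFace_face (hB : IsCompact B) (h0 : 0 ∈ interior B)
    {w : EuclideanSpace ℝ (Fin n)} (hw : w ≠ 0) :
    ∃ c : ℝ, c • w ∈ dualFace B (Face B w) ∧ ∀ x ∈ B, ⟪c • w, x⟫ = 1 → x ∈ Face B w := by
  obtain ⟨x₀, hx₀, hneg⟩ := exists_mem_face_inner_neg hB h0 hw
  rw [face_eq_of_mem hx₀]
  refine ⟨⟪w, x₀⟫⁻¹, ⟨fun x hx ↦ ?_, fun x hx ↦ ?_⟩, fun x hx h1 ↦ ⟨hx, ?_⟩⟩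
  · rw [real_inner_smul_left, inv_mul_eq_div, div_le_one_of_neg hneg]
    exact hx₀.2 x hx
  · rw [real_inner_smul_left, hx.2, inv_mul_cancel₀ hneg.ne]
  · rwa [real_inner_smul_left, inv_mul_eq_div, div_eq_one_iff_eq hneg.ne] at h1

theorem face_neg_eq_of_mem_dualFace {F : Set (EuclideanSpace ℝ (Fin n))}
    {y x₀ : EuclideanSpace ℝ (Fin n)} (hy : y ∈ dualFace B F) (hFB : F ⊆ B) (hx₀ : x₀ ∈ F)
    (hyF : ∀ x ∈ B, ⟪y, x⟫ = 1 → x ∈ F) : Face B (-y) = F := by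
  have hx₀face : x₀ ∈ Face B (-y) := ⟨hFB hx₀, fun z hz ↦ by
    rw [inner_neg_left, inner_neg_left, hy.2 x₀ hx₀, neg_le_neg_iff]
    exact hy.1 z hz⟩
  rw [face_eq_of_mem hx₀face]
  ext x
  simp only [mem_ofPred_eq, inner_neg_left, neg_inj, hy.2 x₀ hx₀]
  exact ⟨fun hx ↦ hyF x hx.1 hx.2, fun hx ↦ ⟨hFB hx, hy.2 x hx⟩⟩

end Face

theorem stmt_6_general {n : ℕ}
    (S : Set (EuclideanSpace ℝ (Fin n))) (hS : S.Finite)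
    (B : Set (EuclideanSpace ℝ (Fin n))) (hB : B = convexHull ℝ S)
    (h0 : (0 : EuclideanSpace ℝ (Fin n)) ∈ interior B)
    (w₀ : EuclideanSpace ℝ (Fin n)) (hw₀ : w₀ ≠ 0)
    (N : Submodule ℝ (EuclideanSpace ℝ (Fin n))) :
    (∃ w : EuclideanSpace ℝ (Fin n), w ≠ 0 ∧ w ∈ N ∧ Face B w = Face B w₀) ↔
      ((N : Set (EuclideanSpace ℝ (Fin n))) ∩
        intrinsicInterior ℝ
          {y : EuclideanSpace ℝ (Fin n) |
            (∀ x ∈ B, (inner ℝ y x : ℝ) ≤ 1) ∧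
            ∀ x ∈ Face B w₀, (inner ℝ y x : ℝ) = 1}).Nonempty := by
  have hBc : IsCompact B := hB ▸ hS.isCompact_convexHull (𝕜 := ℝ)
  change _ ↔ ((N : Set _) ∩ intrinsicInterior ℝ (dualFace B (Face B w₀))).Nonempty
  constructor
  · rintro ⟨w, hw, hwN, hface⟩
    obtain ⟨c, hy, hyF⟩ := exists_smul_mem_dualFace_face hBc h0 hw
    rw [hface] at hy hyF
    subst hB
    exact ⟨c • w, N.smul_mem c hwN, mem_intrinsicInterior_dualFace hS hy hyF⟩
  · rintro ⟨y, hyN, hy⟩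
    obtain ⟨_, hy₀, hy₀F⟩ := exists_smul_mem_dualFace_face hBc h0 hw₀
    obtain ⟨x₀, hx₀, -⟩ := exists_mem_face_inner_neg hBc h0 hw₀
    have hyF : ∀ x ∈ B, ⟪y, x⟫ = 1 → x ∈ Face B w₀ := fun x hx ↦
      mem_of_inner_eq_one_of_mem_intrinsicInterior_dualFace hy hy₀ hy₀F hx
    have hyx₀ : ⟪y, x₀⟫ = 1 := (intrinsicInterior_subset hy).2 x₀ hx₀
    refine ⟨-y, neg_ne_zero.mpr ?_, N.neg_mem hyN,
      face_neg_eq_of_mem_dualFace (intrinsicInterior_subset hy) (fun x hx ↦ hx.1) hx₀ hyF⟩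
    rintro rfl
    simp at hyx₀

/-- For a centrally symmetric full-dimensional polytope `B` with
`0` in its interior, a face `F = Face B w₀`, its dual face
`F* = {y | (∀ x ∈ B, ⟪y,x⟫ ≤ 1) ∧ ∀ x ∈ F, ⟪y,x⟫ = 1}` of the polar dual `B*`,
and a linear subspace `N`, we have: `F` belongs to the type of `N` (i.e. there is
a nonzero `w ∈ N` with `Face B w = F`) iff `N` meets the relative interior of `F*`. -/
theorem stmt_6 {n : ℕ}
    (S : Set (EuclideanSpace ℝ (Fin n))) (hS : S.Finite)
    (B : Set (EuclideanSpace ℝ (Fin n))) (hB : B = convexHull ℝ S)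
    (h0 : (0 : EuclideanSpace ℝ (Fin n)) ∈ interior B) (hsymm : B = -B)
    (w₀ : EuclideanSpace ℝ (Fin n)) (hw₀ : w₀ ≠ 0)
    (N : Submodule ℝ (EuclideanSpace ℝ (Fin n))) :
    (∃ w : EuclideanSpace ℝ (Fin n), w ≠ 0 ∧ w ∈ N ∧ Face B w = Face B w₀) ↔
      ((N : Set (EuclideanSpace ℝ (Fin n))) ∩
        intrinsicInterior ℝ
          {y : EuclideanSpace ℝ (Fin n) |
            (∀ x ∈ B, (inner ℝ y x : ℝ) ≤ 1) ∧
            ∀ x ∈ Face B w₀, (inner ℝ y x : ℝ) = 1}).Nonempty :=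
  stmt_6_general S hS B hB h0 w₀ hw₀ N
end

section
/- Let K be a field, n ≥ 0, d ≥ 1, and let R := K[u₁,…,uₙ] (the multivariate polynomial ring MvPolynomial (Fin n) K). Let f = Σ_{i=0}^d a_i t^i and g = Σ_{i=0}^d b_i t^i be polynomials in R[t] whose coefficients satisfy totalDegree(a_i) ≤ d - i and totalDegree(b_i) ≤ d - i for all 0 ≤ i ≤ d. Then the determinant of the 2d × 2d Sylvester matrix of f and g formed with respect to degree d (whose first d rows are the shifted coefficient sequences of f and whose last d rows are the shifted coefficient sequences of g), i.e. the resultant res(f, g) ∈ R, has total degree at most d². -/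
/-! Weight row `i` of the Sylvester matrix by `i` (by `i - k` in the rows of `b`) and column `j`
by `j`. The degree bounds on the coefficients say that every nonzero entry has total degree at
most its column weight minus its row weight, so each term of the Leibniz expansion of the
determinant has total degree at most `∑ j - ∑ (row weights) = k * m`. -/

/-- The Sylvester matrix (with respect to formal degrees `m` and `k`) of two
polynomials with coefficient sequences `a` (degree `m`, occupying the first `k`
rows) and `b` (degree `k`, occupying the last `m` rows): the `(k+m) × (k+m)`
matrix with entries `T_{i, i+j} = a_{m-j}` for the first `k` rows and
`T_{i, i-k+j} = b_{k-j}` for the last `m` rows (0-indexed). Its determinant is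
the resultant. -/
def sylvGen {R : Type*} [CommRing R] (m k : ℕ) (a b : ℕ → R) :
    Matrix (Fin (k + m)) (Fin (k + m)) R :=
  Matrix.of fun i j =>
    if (i : ℕ) < k then
      (if (i : ℕ) ≤ (j : ℕ) ∧ (j : ℕ) ≤ (i : ℕ) + m then a (m - ((j : ℕ) - (i : ℕ))) else 0)
    else
      (if (j : ℕ) ≤ (i : ℕ) ∧ (i : ℕ) ≤ (j : ℕ) + k then b ((i : ℕ) - (j : ℕ)) else 0)

open MvPolynomial Finset

section WeightedDegree

variable {n ι R : Type*} [Fintype n] [CommRing R]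

theorem totalDegree_prod_perm_add_sum_le (M : Matrix n n (MvPolynomial ι R)) (v w : n → ℕ)
    (hM : ∀ i j, M i j ≠ 0 → (M i j).totalDegree + v i ≤ w j) (τ : Equiv.Perm n)
    (hτ : ∏ i, M (τ i) i ≠ 0) :
    (∏ i, M (τ i) i).totalDegree + ∑ i, v i ≤ ∑ j, w j := by
  have hentry : ∀ i, M (τ i) i ≠ 0 := fun i h => hτ (prod_eq_zero (mem_univ i) h)
  calc (∏ i, M (τ i) i).totalDegree + ∑ i, v i
      ≤ ∑ i, (M (τ i) i).totalDegree + ∑ i, v (τ i) := by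
        rw [Equiv.sum_comp τ v]
        exact Nat.add_le_add_right (totalDegree_finsetProd _ _) _
    _ = ∑ i, ((M (τ i) i).totalDegree + v (τ i)) := sum_add_distrib.symm
    _ ≤ ∑ j, w j := sum_le_sum fun i _ => hM _ _ (hentry i)

theorem totalDegree_det_le_of_weights [DecidableEq n] (M : Matrix n n (MvPolynomial ι R))
    (v w : n → ℕ) (hM : ∀ i j, M i j ≠ 0 → (M i j).totalDegree + v i ≤ w j) :
    M.det.totalDegree ≤ ∑ j, w j - ∑ i, v i := by
  rw [Matrix.det_apply]
  refine (totalDegree_finsetSum _ _).trans (Finset.sup_le fun τ _ => ?_)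
  refine (totalDegree_smul_le _ _).trans ?_
  by_cases hτ : ∏ i, M (τ i) i = 0
  · simp [hτ]
  · exact Nat.le_sub_of_add_le (totalDegree_prod_perm_add_sum_le M v w hM τ hτ)

end WeightedDegree

section Sylvester

variable {ι R : Type*} [CommRing R]

theorem totalDegree_sylvGen_add_le (m k : ℕ) (a b : ℕ → MvPolynomial ι R)
    (ha : ∀ i, i ≤ m → (a i).totalDegree ≤ m - i)
    (hb : ∀ i, i ≤ k → (b i).totalDegree ≤ k - i) (i j : Fin (k + m))
    (hij : sylvGen m k a b i j ≠ 0) :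
    (sylvGen m k a b i j).totalDegree + (if (i : ℕ) < k then (i : ℕ) else i - k) ≤ j := by
  simp only [sylvGen, Matrix.of_apply] at hij ⊢
  split_ifs at hij ⊢ with hi hband hband
  · have := ha (m - (j - i)) (by omega)
    omega
  · exact absurd rfl hij
  · have := hb (i - j) (by omega)
    omega
  · exact absurd rfl hij

theorem totalDegree_det_sylvGen_le (m k : ℕ) (a b : ℕ → MvPolynomial ι R)
    (ha : ∀ i, i ≤ m → (a i).totalDegree ≤ m - i)
    (hb : ∀ i, i ≤ k → (b i).totalDegree ≤ k - i) :
    (sylvGen m k a b).det.totalDegree ≤ k * m := by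
  have hweights : (∑ j : Fin (k + m), (j : ℕ)) -
      ∑ i : Fin (k + m), (if (i : ℕ) < k then (i : ℕ) else i - k) = k * m := by
    simp only [Fin.sum_univ_add, Fin.val_castAdd, Fin.val_natAdd, Fin.is_lt, if_true,
      Nat.add_sub_cancel_left, sum_add_distrib, sum_const, card_univ, Fintype.card_fin,
      smul_eq_mul, add_lt_iff_neg_left, Nat.not_lt_zero, if_false]
    rw [Nat.mul_comm]
    omega
  rw [← hweights]
  exact totalDegree_det_le_of_weights _ _ _ (totalDegree_sylvGen_add_le m k a b ha hb)

end Sylvester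

theorem stmt_10_general {K : Type*} [Field K] (n d : ℕ)
    (a b : ℕ → MvPolynomial (Fin n) K)
    (ha : ∀ i, i ≤ d → (a i).totalDegree ≤ d - i)
    (hb : ∀ i, i ≤ d → (b i).totalDegree ≤ d - i) :
    ((sylvGen d d a b).det).totalDegree ≤ d ^ 2 :=
  sq d ▸ totalDegree_det_sylvGen_le d d a b ha hb

/-- If `f = Σ_{i=0}^d a_i t^i` and `g = Σ_{i=0}^d b_i t^i` have
coefficients in `R = K[u₁,…,uₙ]` with `totalDegree (a i) ≤ d - i` and
`totalDegree (b i) ≤ d - i`, then the determinant of their `2d × 2d` Sylvester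
matrix (the resultant `res(f,g) ∈ R`) has total degree at most `d²`. -/
theorem stmt_10 {K : Type*} [Field K] (n d : ℕ) (hd : 1 ≤ d)
    (a b : ℕ → MvPolynomial (Fin n) K)
    (ha : ∀ i, i ≤ d → (a i).totalDegree ≤ d - i)
    (hb : ∀ i, i ≤ d → (b i).totalDegree ≤ d - i) :
    ((sylvGen d d a b).det).totalDegree ≤ d ^ 2 :=
  stmt_10_general n d a b ha hb
end

section
/- Let f ∈ ℝ[x₁,…,xₙ] be a polynomial of total degree d ≥ 1 and let a, b ∈ ℝⁿ. In the polynomial ring ℝ[u₁,…,uₙ][λ], define g₁(λ) := f(u + λ·a) and g₂(λ) := f(u + λ·b), obtained from f by the substitutions x_i ↦ u_i + λ a_i and x_i ↦ u_i + λ b_i respectively; each g_k has degree at most d in λ, and the coefficient of λ^i in g_k has total degree at most d - i in the u-variables. Let R ∈ ℝ[u₁,…,uₙ] be the determinant of the 2d × 2d Sylvester matrix of g₁ and g₂ with respect to degree d (the resultant eliminating λ). Then f(u) divides R in ℝ[u₁,…,uₙ] and totalDegree(R) ≤ d²; consequently R = f · g for some g ∈ ℝ[u₁,…,uₙ] with totalDegree(g)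 ≤ d² - d. (This is the content of the vertex–vertex degree bound: the elimination ideal I_{(F₁,F₂)} for a pair of vertices of the unit ball is generated by f(u)·g(u) of degree at most d², and the corresponding component of the medial axis has degree at most d² - d.) -/
/-- `substLine f a` is `f(u + λ·a)`, the image of `f ∈ ℝ[x₁,…,xₙ]` under the
substitution `xᵢ ↦ uᵢ + λ aᵢ`, viewed as a polynomial in `λ` over `ℝ[u₁,…,uₙ]`. -/
noncomputable def substLine {n : ℕ} (f : MvPolynomial (Fin n) ℝ) (a : Fin n → ℝ) :
    Polynomial (MvPolynomial (Fin n) ℝ) :=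
  MvPolynomial.aeval
    (fun i => Polynomial.C (MvPolynomial.X i) +
      Polynomial.C (MvPolynomial.C (a i)) * Polynomial.X) f

/-!
Give `λ` weight one. Since `f(u + λ a)` arises from `f` by substituting polynomials of degree one
in `(λ, u)`, its `λ^i`-coefficient has total degree at most `d - i`. The `(i, j)` entry of the
Sylvester matrix then has degree at most `r i + c j` for row and column weights with total `d²`,
which bounds the degree of every term of the determinant. Both constant coefficients equal `f`,
so the last column of the Sylvester matrix is divisible by `f`, hence so is `R`; the degree of the
cofactor follows because `ℝ[u]` is a domain.
-/

open MvPolynomial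

section TotalDegree

variable {σ τ R : Type*} [CommRing R]

theorem MvPolynomial.totalDegree_aeval_le {g : σ → MvPolynomial τ R} {k : ℕ}
    (hg : ∀ i, (g i).totalDegree ≤ k) (f : MvPolynomial σ R) :
    (aeval g f).totalDegree ≤ f.totalDegree * k := by
  conv_lhs => rw [f.as_sum, map_sum]
  refine totalDegree_finsetSum_le fun s hs => ?_
  rw [aeval_monomial, ← C_eq_algebraMap]
  refine (totalDegree_mul _ _).trans ?_
  rw [totalDegree_C, zero_add, Finsupp.prod]
  calc (∏ i ∈ s.support, g i ^ s i).totalDegree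
      ≤ ∑ i ∈ s.support, (g i ^ s i).totalDegree := totalDegree_finsetProd _ _
    _ ≤ ∑ i ∈ s.support, s i * k := Finset.sum_le_sum fun i _ =>
        (totalDegree_pow _ _).trans (Nat.mul_le_mul_left _ (hg i))
    _ = (s.sum fun _ e => e) * k := by rw [Finsupp.sum, Finset.sum_mul]
    _ ≤ f.totalDegree * k := Nat.mul_le_mul_right _ (le_totalDegree hs)

variable [Fintype σ] [DecidableEq σ]

theorem Matrix.totalDegree_det_le (M : Matrix σ σ (MvPolynomial τ R)) (r c : σ → ℤ)
    (hM : ∀ i j, M i j ≠ 0 → ((M i j).totalDegree : ℤ) ≤ r i + c j) :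
    M.det.totalDegree ≤ (∑ i, r i + ∑ j, c j).toNat := by
  obtain ⟨p, -, hp⟩ := Finset.exists_mem_eq_sup Finset.univ Finset.univ_nonempty
    fun p : Equiv.Perm σ => (Equiv.Perm.sign p • ∏ i, M (p i) i).totalDegree
  rw [Matrix.det_apply]
  refine (totalDegree_finsetSum _ _).trans (hp.trans_le ?_)
  rw [Units.smul_def]
  refine (totalDegree_smul_le _ _).trans ?_
  by_cases hzero : ∃ i, M (p i) i = 0
  · obtain ⟨i, hi⟩ := hzero
    rw [Finset.prod_eq_zero (f := fun i => M (p i) i) (Finset.mem_univ i) hi, totalDegree_zero]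
    exact Nat.zero_le _
  push Not at hzero
  have hsum : ((∑ i, (M (p i) i).totalDegree : ℕ) : ℤ) ≤ ∑ i, r i + ∑ j, c j :=
    calc ((∑ i, (M (p i) i).totalDegree : ℕ) : ℤ) ≤ ∑ i, (r (p i) + c i) := by
          push_cast
          exact Finset.sum_le_sum fun i _ => hM _ _ (hzero i)
      _ = ∑ i, r i + ∑ j, c j := by rw [Finset.sum_add_distrib, Equiv.sum_comp p r]
  have := totalDegree_finsetProd Finset.univ fun i => M (p i) i
  omega

theorem Matrix.dvd_det_of_forall_dvd_col (M : Matrix σ σ R) (j : σ) {c : R}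
    (h : ∀ i, c ∣ M i j) : c ∣ M.det := by
  choose v hv using h
  have hM : M = M.updateCol j (c • v) := by
    ext i k
    rcases eq_or_ne k j with rfl | hk
    · simp [hv]
    · simp [Matrix.updateCol_ne hk]
  rw [hM, Matrix.det_updateCol_smul]
  exact dvd_mul_right _ _

end TotalDegree

section Sylvester

variable {R : Type*} [CommRing R] {m k : ℕ} {A B : ℕ → R}

theorem dvd_det_sylvGen (hkm : 0 < k + m) {c : R} (hA : c ∣ A 0) (hB : c ∣ B 0) :
    c ∣ (sylvGen m k A B).det := by
  -- Only the entries `A 0` (row `k - 1`) and `B 0` (last row) of the last column are nonzero.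
  refine Matrix.dvd_det_of_forall_dvd_col _ ⟨k + m - 1, by omega⟩ fun i => ?_
  simp only [sylvGen, Matrix.of_apply]
  split_ifs
  · rwa [show m - (k + m - 1 - i) = 0 by omega]
  · exact dvd_zero c
  · rwa [show (i : ℕ) - (k + m - 1) = 0 by omega]
  · exact dvd_zero c

theorem totalDegree_det_sylvGen_le_s11 {τ : Type*} {A B : ℕ → MvPolynomial τ R}
    (hA : ∀ i, A i ≠ 0 → (A i).totalDegree + i ≤ m)
    (hB : ∀ i, B i ≠ 0 → (B i).totalDegree + i ≤ k) :
    (sylvGen m k A B).det.totalDegree ≤ m * k := by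
  -- Entry `(i, j)` is `A (m - (j - i))` or `B (i - j)`, of degree at most `j - i` resp.
  -- `k - i + j`; the weights `r i + c i` are `0` on the first `k` rows and `k` on the last `m`.
  let r : Fin (k + m) → ℤ := fun i => (if (i : ℕ) < k then 0 else k) - i
  let c : Fin (k + m) → ℤ := fun j => j
  have hentry : ∀ i j, sylvGen m k A B i j ≠ 0 →
      ((sylvGen m k A B i j).totalDegree : ℤ) ≤ r i + c j := by
    intro i j hij
    simp only [sylvGen, Matrix.of_apply, r, c] at hij ⊢
    split_ifs at hij ⊢
    · have := hA _ hij; omega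
    · exact absurd rfl hij
    · have := hB _ hij; omega
    · exact absurd rfl hij
  have hsum : ∑ i, r i + ∑ j, c j = m * k := by
    rw [← Finset.sum_add_distrib, Fin.sum_univ_add]
    simp [r, c]
  refine (Matrix.totalDegree_det_le _ r c hentry).trans_eq ?_
  rw [hsum]
  exact_mod_cast Int.toNat_natCast _

end Sylvester

section SubstLine

variable {n : ℕ} (f : MvPolynomial (Fin n) ℝ) (a : Fin n → ℝ)

theorem substLine_eq_finSuccEquiv :
    substLine f a = finSuccEquiv ℝ n (aeval (fun i => X i.succ + C (a i) * X 0) f) := by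
  rw [substLine, ← AlgEquiv.coe_toAlgHom, ← AlgHom.comp_apply, comp_aeval]
  refine congrArg (fun g => aeval g f) (funext fun i => ?_)
  simp only [AlgEquiv.coe_toAlgHom, map_add, map_mul, finSuccEquiv_X_zero, finSuccEquiv_X_succ,
    ← algebraMap_eq, AlgEquiv.commutes, Polynomial.algebraMap_apply]

theorem totalDegree_aeval_X_succ_add_C_mul_X_zero_le :
    (aeval (fun i : Fin n => X i.succ + C (a i) * X 0) f).totalDegree ≤ f.totalDegree := by
  refine (totalDegree_aeval_le (fun i => ?_) f).trans_eq (mul_one _)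
  refine (totalDegree_add _ _).trans (max_le ((totalDegree_X _).le) ?_)
  refine (totalDegree_mul _ _).trans ?_
  rw [totalDegree_C, zero_add]
  exact (totalDegree_X _).le

theorem natDegree_substLine_le : (substLine f a).natDegree ≤ f.totalDegree := by
  rw [substLine_eq_finSuccEquiv, natDegree_finSuccEquiv]
  exact (degreeOf_le_totalDegree _ _).trans (totalDegree_aeval_X_succ_add_C_mul_X_zero_le f a)

theorem totalDegree_coeff_substLine_add_le (i : ℕ) (hi : (substLine f a).coeff i ≠ 0) :
    ((substLine f a).coeff i).totalDegree + i ≤ f.totalDegree := by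
  rw [substLine_eq_finSuccEquiv] at hi ⊢
  exact (totalDegree_coeff_finSuccEquiv_add_le _ i hi).trans
    (totalDegree_aeval_X_succ_add_C_mul_X_zero_le f a)

theorem totalDegree_coeff_substLine_le (i : ℕ) :
    ((substLine f a).coeff i).totalDegree ≤ f.totalDegree - i := by
  by_cases hi : (substLine f a).coeff i = 0
  · simp [hi]
  · have := totalDegree_coeff_substLine_add_le f a i hi
    omega

theorem substLine_coeff_zero : (substLine f a).coeff 0 = f := by
  rw [Polynomial.coeff_zero_eq_eval_zero, substLine]
  induction f using MvPolynomial.induction_on <;> simp_all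

end SubstLine

/-- (Vertex–vertex degree bound.) For `f` of total degree
`d ≥ 1` and `a, b ∈ ℝⁿ`, the polynomials `g₁ = f(u + λ·a)` and `g₂ = f(u + λ·b)`
have degree at most `d` in `λ` with `λ^i`-coefficients of total degree at most
`d - i`; the determinant `R` of their `2d × 2d` Sylvester matrix satisfies
`totalDegree R ≤ d²` and `R = f · g` for some `g` of total degree at most
`d² - d`. -/
theorem stmt_11 {n : ℕ} (d : ℕ) (hd : 1 ≤ d)
    (f : MvPolynomial (Fin n) ℝ) (hdeg : f.totalDegree = d)
    (a b : Fin n → ℝ) :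
    (substLine f a).natDegree ≤ d ∧
    (substLine f b).natDegree ≤ d ∧
    (∀ i, ((substLine f a).coeff i).totalDegree ≤ d - i) ∧
    (∀ i, ((substLine f b).coeff i).totalDegree ≤ d - i) ∧
    ((sylvGen d d (fun i => (substLine f a).coeff i)
        (fun i => (substLine f b).coeff i)).det).totalDegree ≤ d ^ 2 ∧
    ∃ g : MvPolynomial (Fin n) ℝ,
      (sylvGen d d (fun i => (substLine f a).coeff i)
        (fun i => (substLine f b).coeff i)).det = f * g ∧
      g.totalDegree ≤ d ^ 2 - d := by
  subst hdeg
  have hf : f ≠ 0 := by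
    rintro rfl
    simp at hd
  have hR := totalDegree_det_sylvGen_le_s11 (totalDegree_coeff_substLine_add_le f a)
    (totalDegree_coeff_substLine_add_le f b)
  rw [← sq] at hR
  obtain ⟨g, hg⟩ := dvd_det_sylvGen (m := f.totalDegree) (k := f.totalDegree) (by omega)
    (dvd_of_eq (substLine_coeff_zero f a).symm) (dvd_of_eq (substLine_coeff_zero f b).symm)
  refine ⟨natDegree_substLine_le f a, natDegree_substLine_le f b,
    totalDegree_coeff_substLine_le f a, totalDegree_coeff_substLine_le f b, hR, g, hg, ?_⟩
  rcases eq_or_ne g 0 with rfl | hg0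
  · simp
  · rw [hg, totalDegree_mul_of_isDomain hf hg0] at hR
    omega
end
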